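/- arXiv:1209.6007 — 5 statements merged into one kernel-verified Lean document; each statement's English description precedes it below -/
import Mathlib

section
/- If v is a side vertex of a graph G, i.e., the subgraph induced by the neighborhood of v is a clique, then v is internal to no shortest path between any two vertices s, t distinct from v. Consequently the betweenness centrality of a side vertex is zero. -/
open SimpleGraph

/-- Number of shortest `s`–`t` paths in `G`. -/
noncomputable def sigmaP {V : Type} (G : SimpleGraph V) (s t : V) : ℕ :=
  Nat.card {p : G.Walk s t // p.IsPath ∧ p.length = G.dist s t}

/-- Number of shortest `s`–`t` paths in `G` having `v` as an internal vertex. -/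
noncomputable def sigmaThr {V : Type} (G : SimpleGraph V) (s t v : V) : ℕ :=
  Nat.card {p : G.Walk s t // p.IsPath ∧ p.length = G.dist s t ∧
    v ∈ p.support ∧ v ≠ s ∧ v ≠ t}

/-- Betweenness centrality (division by zero gives 0, so only pairs with
`sigmaP G s t > 0` contribute). -/
noncomputable def bc {V : Type} (G : SimpleGraph V) [Fintype V] (v : V) : ℚ :=
  ∑ s, ∑ t, (sigmaThr G s t v : ℚ) / (sigmaP G s t : ℚ)

/-!
If `v` is an internal vertex of an `s`–`t` walk, entered from `a` and left towards `b`, then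
`a` and `b` are neighbours of `v`, hence equal or adjacent. Replacing the detour `a, v, b` by
`a, b` (or by nothing) yields a strictly shorter `s`–`t` walk, so no shortest walk passes
through `v`. Every summand of `bc G v` therefore has numerator zero.
-/

namespace SimpleGraph

variable {V : Type} {G : SimpleGraph V} {s t v : V}

def IsSideVertex (G : SimpleGraph V) (v : V) : Prop :=
  (G.neighborSet v).Pairwise G.Adj

lemma IsSideVertex.exists_walk_length_le_one (hv : G.IsSideVertex v) {a b : V}
    (ha : G.Adj a v) (hb : G.Adj v b) : ∃ m : G.Walk a b, m.length ≤ 1 := by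
  by_cases hab : a = b
  · subst hab
    exact ⟨.nil, zero_le_one⟩
  · exact ⟨.cons (hv ha.symm hb hab) .nil, le_rfl⟩

lemma IsSideVertex.exists_walk_length_lt (hv : G.IsSideVertex v) (p : G.Walk s t)
    (hmem : v ∈ p.support) (hs : s ≠ v) (ht : t ≠ v) :
    ∃ w : G.Walk s t, w.length < p.length := by
  classical
  set q := p.takeUntil v hmem
  set r := p.dropUntil v hmem
  have hq : ¬ q.Nil := Walk.not_nil_of_ne hs
  have hr : ¬ r.Nil := Walk.not_nil_of_ne ht.symm
  obtain ⟨m, hm⟩ := hv.exists_walk_length_le_one (Walk.adj_penultimate hq) (Walk.adj_snd hr)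
  have hlen : q.length + r.length = p.length := by
    rw [← Walk.length_append, p.take_spec hmem]
  refine ⟨q.dropLast.append (m.append r.tail), ?_⟩
  have := Walk.length_dropLast_add_one hq
  have := Walk.length_tail_add_one hr
  simp only [Walk.length_append]
  omega

lemma IsSideVertex.notMem_support_of_length_eq_dist (hv : G.IsSideVertex v)
    (p : G.Walk s t) (hs : s ≠ v) (ht : t ≠ v) (hp : p.length = G.dist s t) :
    v ∉ p.support := fun hmem => by
  obtain ⟨w, hw⟩ := hv.exists_walk_length_lt p hmem hs ht
  exact (G.dist_le w).not_gt (hp ▸ hw)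

lemma IsSideVertex.sigmaThr_eq_zero (hv : G.IsSideVertex v) (s t : V) :
    sigmaThr G s t v = 0 := by
  have : IsEmpty {p : G.Walk s t // p.IsPath ∧ p.length = G.dist s t ∧
      v ∈ p.support ∧ v ≠ s ∧ v ≠ t} :=
    ⟨fun ⟨p, _, hp, hmem, hs, ht⟩ =>
      hv.notMem_support_of_length_eq_dist p hs.symm ht.symm hp hmem⟩
  exact Nat.card_of_isEmpty

lemma IsSideVertex.bc_eq_zero [Fintype V] (hv : G.IsSideVertex v) : bc G v = 0 := by
  simp [bc, hv.sigmaThr_eq_zero]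

end SimpleGraph

theorem side_vertex_bc_zero {V : Type} [Fintype V] (G : SimpleGraph V) (v : V)
    (hside : (G.neighborSet v).Pairwise G.Adj) :
    (∀ s t : V, s ≠ v → t ≠ v → ∀ p : G.Walk s t, p.IsPath →
      p.length = G.dist s t → v ∉ p.support) ∧ bc G v = 0 :=
  ⟨fun _ _ hs ht p _ hp => IsSideVertex.notMem_support_of_length_eq_dist hside p hs ht hp,
    IsSideVertex.bc_eq_zero hside⟩
end

section
/- Let u, v, s, t be vertices of a connected graph G such that every shortest s–t path passes through u, with u ∉ {s,t}. Then σ_{st} = σ_{su} · σ_{ut}, i.e., the number of shortest s–t paths is the product of the number of shortest s–u paths and the number of shortest u–t paths. -/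
open SimpleGraph

/-! Cutting a shortest walk at any of its vertices `u` yields shortest walks, because the two
pieces are no shorter than `dist s u` and `dist u t` while their total length `dist s t` is at
most `dist s u + dist u t`. Hence when all shortest `s`–`t` paths pass through `u`, cutting at
`u` and concatenating are inverse bijections between shortest `s`–`t` paths and pairs of
shortest `s`–`u` and `u`–`t` paths. -/

namespace SimpleGraph

variable {V : Type} {G : SimpleGraph V} {s u t : V}

namespace Walk

theorem append_right_injective (p : G.Walk s u) :
    Function.Injective (p.append : G.Walk u t → G.Walk s t) := fun q q' h =>
  darts_injective <| List.append_cancel_left <| by simpa only [darts_append] using congrArg darts h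

variable [DecidableEq V]

theorem IsPath.takeUntil_end {p : G.Walk s u} (hp : p.IsPath) :
    p.takeUntil u p.end_mem_support = p := by
  induction p with
  | nil => rfl
  | cons hadj p ih =>
    rw [cons_isPath_iff] at hp
    rw [takeUntil_cons p.end_mem_support (by rintro rfl; exact hp.2 p.end_mem_support), ih hp.1]

theorem takeUntil_append_of_isPath {p : G.Walk s u} {q : G.Walk u t} (hpq : (p.append q).IsPath)
    (hu : u ∈ (p.append q).support) : (p.append q).takeUntil u hu = p := by
  rw [takeUntil_append_of_mem_left p q p.end_mem_support, hpq.of_append_left.takeUntil_end]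

theorem dropUntil_append_of_isPath {p : G.Walk s u} {q : G.Walk u t} (hpq : (p.append q).IsPath)
    (hu : u ∈ (p.append q).support) : (p.append q).dropUntil u hu = q := by
  apply p.append_right_injective
  conv_lhs => enter [1]; rw [← takeUntil_append_of_isPath hpq hu]
  exact take_spec _ hu

theorem length_takeUntil_and_dropUntil_eq_dist {p : G.Walk s t} (hp : p.length = G.dist s t)
    (hu : u ∈ p.support) :
    (p.takeUntil u hu).length = G.dist s u ∧ (p.dropUntil u hu).length = G.dist u t := by
  have hsplit := congrArg length (p.take_spec hu)
  rw [length_append] at hsplit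
  have := (p.takeUntil u hu).reachable.dist_triangle_left t
  have := dist_le (p.takeUntil u hu)
  have := dist_le (p.dropUntil u hu)
  omega

end Walk

abbrev ShortestPath (G : SimpleGraph V) (s t : V) : Type :=
  {p : G.Walk s t // p.IsPath ∧ p.length = G.dist s t}

section ThroughVertex

variable (h : ∀ p : G.Walk s t, p.IsPath → p.length = G.dist s t → u ∈ p.support)
include h

theorem dist_eq_add_of_forall_mem_support (hst : G.Reachable s t) :
    G.dist s t = G.dist s u + G.dist u t := by
  classical
  obtain ⟨p, hp⟩ := hst.exists_walk_length_eq_dist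
  have hu := h p (p.isPath_of_length_eq_dist hp) hp
  obtain ⟨hl, hr⟩ := p.length_takeUntil_and_dropUntil_eq_dist hp hu
  rw [← hp, ← p.take_spec hu, Walk.length_append, hl, hr]

theorem length_append_eq_dist_of_forall_mem_support {p : G.Walk s u} {q : G.Walk u t}
    (hp : p.length = G.dist s u) (hq : q.length = G.dist u t) :
    (p.append q).length = G.dist s t := by
  rw [Walk.length_append, hp, hq, dist_eq_add_of_forall_mem_support h (p.append q).reachable]

def shortestPathEquivOfForallMemSupport [DecidableEq V] :
    G.ShortestPath s t ≃ G.ShortestPath s u × G.ShortestPath u t where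
  toFun p :=
    have hu := h p.1 p.2.1 p.2.2
    have hlen := p.1.length_takeUntil_and_dropUntil_eq_dist p.2.2 hu
    (⟨p.1.takeUntil u hu, p.2.1.takeUntil hu, hlen.1⟩,
      ⟨p.1.dropUntil u hu, p.2.1.dropUntil hu, hlen.2⟩)
  invFun pq :=
    have hlen := length_append_eq_dist_of_forall_mem_support h pq.1.2.2 pq.2.2.2
    ⟨pq.1.1.append pq.2.1, Walk.isPath_of_length_eq_dist _ hlen, hlen⟩
  left_inv p := Subtype.ext (p.1.take_spec _)
  right_inv pq := by
    have hpath := Walk.isPath_of_length_eq_dist _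
      (length_append_eq_dist_of_forall_mem_support h pq.1.2.2 pq.2.2.2)
    exact Prod.ext (Subtype.ext (Walk.takeUntil_append_of_isPath hpath _))
      (Subtype.ext (Walk.dropUntil_append_of_isPath hpath _))

end ThroughVertex

end SimpleGraph

theorem sigma_mul_through_cut_vertex_general {V : Type} (G : SimpleGraph V)
    (u s t : V)
    (h : ∀ p : G.Walk s t, p.IsPath → p.length = G.dist s t → u ∈ p.support) :
    sigmaP G s t = sigmaP G s u * sigmaP G u t := by
  classical
  rw [sigmaP, sigmaP, sigmaP, ← Nat.card_prod]
  exact Nat.card_congr (shortestPathEquivOfForallMemSupport h)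

theorem sigma_mul_through_cut_vertex {V : Type} (G : SimpleGraph V)
    (hconn : G.Connected) (u s t : V) (hus : u ≠ s) (hut : u ≠ t)
    (h : ∀ p : G.Walk s t, p.IsPath → p.length = G.dist s t → u ∈ p.support) :
    sigmaP G s t = sigmaP G s u * sigmaP G u t :=
  sigma_mul_through_cut_vertex_general G u s t h
end

section
/- Let v be a side vertex of a connected graph G (the neighborhood Γ(v) induces a clique), and let G' = G − v. Then for all s, t ∈ V \ {v}, the distance between s and t in G' equals the distance in G, and the number of shortest s–t paths is unchanged: σ'_{st} = σ_{st}. -/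
/-!
A shortest walk between two vertices other than the side vertex `v` never passes through `v`:
if it entered `v` from `a` and left it to `b`, then either `a = b` or `a` and `b` are adjacent
(both are neighbours of `v`), and cutting out `v` would give a shorter walk. So the vertex set
`V \ {v}` is geodesically convex, and on a convex set the induced subgraph has the same distances
and the same shortest paths as `G`.
-/

open SimpleGraph

namespace SimpleGraph

variable {V V' : Type*} {G : SimpleGraph V}

theorem Walk.length_induce {S : Set V} :
    ∀ {u w : V} (p : G.Walk u w) (hp : ∀ x ∈ p.support, x ∈ S), (p.induce S hp).length = p.length
  | _, _, .nil, _ => rfl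
  | _, _, .cons _ p, _ => by simp [p.length_induce]

theorem Walk.exists_length_lt_of_mem_support {v : V} (hside : (G.neighborSet v).Pairwise G.Adj)
    {s t : V} (p : G.Walk s t) (hv : v ∈ p.support) (hs : s ≠ v) (ht : t ≠ v) :
    ∃ q : G.Walk s t, q.length < p.length := by
  classical
  set p₁ := p.takeUntil v hv
  set p₂ := p.dropUntil v hv
  have hp₁ : ¬p₁.Nil := Walk.not_nil_of_ne hs
  have hp₂ : ¬p₂.Nil := Walk.not_nil_of_ne ht.symm
  have hlen : p₁.length + p₂.length = p.length := by
    rw [← Walk.length_append, Walk.take_spec]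
  have h₁ := p₁.length_dropLast_add_one hp₁
  have h₂ := p₂.length_tail_add_one hp₂
  obtain hab | hab := eq_or_ne p₁.penultimate p₂.snd
  · refine ⟨(p₁.dropLast.copy rfl hab).append p₂.tail, ?_⟩
    simp only [Walk.length_append, Walk.length_copy]
    omega
  · have hadj : G.Adj p₁.penultimate p₂.snd :=
      hside (Walk.adj_penultimate hp₁).symm (Walk.adj_snd hp₂) hab
    refine ⟨p₁.dropLast.append (.cons hadj p₂.tail), ?_⟩
    simp only [Walk.length_append, Walk.length_cons]
    omega

theorem Reachable.dist_map_le {G' : SimpleGraph V'} (f : G →g G') {u w : V}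
    (h : G.Reachable u w) : G'.dist (f u) (f w) ≤ G.dist u w := by
  obtain ⟨p, hp⟩ := h.exists_walk_length_eq_dist
  calc G'.dist (f u) (f w) ≤ (p.map f).length := dist_le _
    _ = G.dist u w := by rw [Walk.length_map, hp]

def IsGeodesicallyConvex (G : SimpleGraph V) (S : Set V) : Prop :=
  ∀ ⦃u w : V⦄ (p : G.Walk u w), u ∈ S → w ∈ S → p.length = G.dist u w → ∀ x ∈ p.support, x ∈ S

theorem isGeodesicallyConvex_setOf_ne_of_pairwise_adj {v : V}
    (hside : (G.neighborSet v).Pairwise G.Adj) : G.IsGeodesicallyConvex {w | w ≠ v} := by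
  rintro s t p hs ht hp x hx rfl
  obtain ⟨q, hq⟩ := p.exists_length_lt_of_mem_support hside hx hs ht
  exact (dist_le q).not_gt (hp ▸ hq)

theorem IsGeodesicallyConvex.dist_induce {S : Set V} (hS : G.IsGeodesicallyConvex S) {u w : V}
    (hu : u ∈ S) (hw : w ∈ S) : (G.induce S).dist ⟨u, hu⟩ ⟨w, hw⟩ = G.dist u w := by
  by_cases h : G.Reachable u w
  · obtain ⟨p, hp⟩ := h.exists_walk_length_eq_dist
    let q : (G.induce S).Walk ⟨u, hu⟩ ⟨w, hw⟩ := p.induce S (hS p hu hw hp)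
    refine le_antisymm ?_ (Reachable.dist_map_le (Embedding.induce S).toHom ⟨q⟩)
    calc (G.induce S).dist ⟨u, hu⟩ ⟨w, hw⟩ ≤ q.length := dist_le q
      _ = G.dist u w := by rw [Walk.length_induce, hp]
  · have h' : ¬(G.induce S).Reachable ⟨u, hu⟩ ⟨w, hw⟩ :=
      fun h' => h (h'.map (Embedding.induce S).toHom)
    rw [dist_eq_zero_of_not_reachable h, dist_eq_zero_of_not_reachable h']

theorem IsGeodesicallyConvex.sigmaP_induce {V : Type} {G : SimpleGraph V} {S : Set V}
    (hS : G.IsGeodesicallyConvex S) {u w : V} (hu : u ∈ S) (hw : w ∈ S) :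
    sigmaP (G.induce S) ⟨u, hu⟩ ⟨w, hw⟩ = sigmaP G u w := by
  have hdist := hS.dist_induce hu hw
  let ι : G.induce S ↪g G := Embedding.induce S
  have hinj : Function.Injective ι.toHom := ι.injective
  refine Nat.card_congr (Equiv.ofBijective
    (fun q => ⟨q.1.map ι.toHom, q.2.1.map hinj,
      (Walk.length_map _ _).trans (q.2.2.trans hdist)⟩) ⟨?_, ?_⟩)
  · intro q q' h
    exact Subtype.ext (Walk.map_injective_of_injective hinj _ _ (congrArg Subtype.val h))
  · rintro ⟨p, hpath, hp⟩
    refine ⟨⟨p.induce S (hS p hu hw hp), ?_, by rw [Walk.length_induce, hp, hdist]⟩,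
      Subtype.ext (p.map_induce _)⟩
    exact Walk.IsPath.of_map (f := ι.toHom) (by rwa [Walk.map_induce])

end SimpleGraph

theorem side_vertex_removal_preserves_general {V : Type} (G : SimpleGraph V)
    (v : V)
    (hside : (G.neighborSet v).Pairwise G.Adj) :
    ∀ (s t : V) (hs : s ≠ v) (ht : t ≠ v),
      (G.induce {w : V | w ≠ v}).dist ⟨s, hs⟩ ⟨t, ht⟩ = G.dist s t ∧
      sigmaP (G.induce {w : V | w ≠ v}) ⟨s, hs⟩ ⟨t, ht⟩ = sigmaP G s t := by
  intro s t hs ht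
  have hconvex := isGeodesicallyConvex_setOf_ne_of_pairwise_adj hside
  exact ⟨hconvex.dist_induce hs ht, hconvex.sigmaP_induce hs ht⟩

theorem side_vertex_removal_preserves {V : Type} (G : SimpleGraph V)
    (hconn : G.Connected) (v : V)
    (hside : (G.neighborSet v).Pairwise G.Adj) :
    ∀ (s t : V) (hs : s ≠ v) (ht : t ≠ v),
      (G.induce {w : V | w ≠ v}).dist ⟨s, hs⟩ ⟨t, ht⟩ = G.dist s t ∧
      sigmaP (G.induce {w : V | w ≠ v}) ⟨s, hs⟩ ⟨t, ht⟩ = sigmaP G s t :=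
  side_vertex_removal_preserves_general G v hside
end

section
/- Brandes' recursion: for a fixed source s in a connected unweighted graph G, the accumulated dependency δ_s(v) = Σ_{t∈V} σ_{st}(v)/σ_{st} satisfies δ_s(v) = Σ_{u : v ∈ P_s(u)} (σ_{sv}/σ_{su}) · (1 + δ_s(u)), where P_s(u) = { w ∈ V : {u,w} ∈ E and d_s(u) = d_s(w) + 1 } is the set of predecessors of u in the shortest-path DAG rooted at s. -/
open SimpleGraph

/-! The shortest `s`–`t` paths through `v ≠ s, t` are exactly the concatenations of a shortest
`s`–`v` path with a `v`–`t` walk that gains one unit of distance from `s` at every step, so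
`σ_st(v) = σ_sv · N_v(t)`, where `N_v(t)` counts the latter walks. Splitting off their first
step gives `N_v(t) = Σ_{v ∈ P_s(u)} N_u(t)` for `v ≠ t`, while `N_u(u) = 1`; hence
`1 + δ_s(u) = σ_su · Σ_t N_u(t) / σ_st`, and the recursion follows by exchanging sums. -/

namespace SimpleGraph.Walk

variable {V : Type} {G : SimpleGraph V}

theorem append_inj {u v w : V} {p p' : G.Walk u v} {q q' : G.Walk v w}
    (h : p.append q = p'.append q') (hl : p.length = p'.length) : p = p' ∧ q = q' := by
  induction p with
  | nil =>
    cases p' with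
    | nil => simpa using h
    | cons => simp at hl
  | cons hadj p ih =>
    cases p' with
    | nil => simp at hl
    | cons hadj' p' =>
      rw [cons_append, cons_append] at h
      injection h with _ hw _ hp
      subst hw
      obtain ⟨rfl, rfl⟩ := ih (eq_of_heq hp) (by simpa using hl)
      exact ⟨rfl, rfl⟩

lemma finite_subtype_of_length_eq [Finite V] {u w : V} {P : G.Walk u w → Prop} {n : ℕ}
    (h : ∀ p, P p → p.length = n) : Finite {p // P p} := by
  classical
  have := Fintype.ofFinite V
  exact Finite.of_injective (fun p => (⟨p.1, h p.1 p.2⟩ : {p : G.Walk u w // p.length = n}))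
    fun p q hpq => Subtype.ext (congrArg Subtype.val hpq :)

lemma length_takeUntil_of_length_eq_dist [DecidableEq V] {u v w : V} {p : G.Walk u w}
    (hp : p.length = G.dist u w) (hv : v ∈ p.support) :
    (p.takeUntil v hv).length = G.dist u v := by
  obtain ⟨r, hr⟩ := (p.takeUntil v hv).reachable.exists_walk_length_eq_dist
  have hdetour := dist_le (r.append (p.dropUntil v hv))
  have hsplit := congrArg length (p.take_spec hv)
  have := dist_le (p.takeUntil v hv)
  rw [length_append] at hdetour hsplit
  omega

lemma dist_snd_and_tail_of_dag {s v t : V} (hsv : G.Reachable s v) {q : G.Walk v t}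
    (hq : G.dist s v + q.length = G.dist s t) (hnil : ¬ q.Nil) :
    G.dist s q.snd = G.dist s v + 1 ∧ G.dist s q.snd + q.tail.length = G.dist s t := by
  have hadj := q.adj_snd hnil
  obtain ⟨r, hr⟩ := hsv.exists_walk_length_eq_dist
  obtain ⟨r', hr'⟩ := (hsv.trans hadj.reachable).exists_walk_length_eq_dist
  have hup := dist_le (r.concat hadj)
  have hdetour := dist_le (r'.append q.tail)
  have := length_tail_add_one hnil
  rw [length_concat] at hup
  rw [length_append] at hdetour
  omega

end SimpleGraph.Walk

/-- The number of `w`–`t` walks in the shortest-path DAG rooted at `s`, i.e. of walks whose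
length is the distance gain `d_s(t) - d_s(w)`. -/
noncomputable def dagPathCount {V : Type} (G : SimpleGraph V) (s w t : V) : ℕ :=
  Nat.card {q : G.Walk w t // G.dist s w + q.length = G.dist s t}

section Counting

variable {V : Type} (G : SimpleGraph V)

lemma sigmaP_eq_card (s t : V) :
    sigmaP G s t = Nat.card {p : G.Walk s t // p.length = G.dist s t} :=
  Nat.card_congr <| Equiv.subtypeEquivRight fun p =>
    ⟨And.right, fun h => ⟨p.isPath_of_length_eq_dist h, h⟩⟩

lemma sigmaP_pos [Finite V] {s t : V} (h : G.Reachable s t) : 0 < sigmaP G s t := by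
  have := Walk.finite_subtype_of_length_eq (P := fun p : G.Walk s t => p.length = G.dist s t)
    fun _ => id
  obtain ⟨p, hp⟩ := h.exists_walk_length_eq_dist
  rw [sigmaP_eq_card]
  have : Nonempty {p : G.Walk s t // p.length = G.dist s t} := ⟨⟨p, hp⟩⟩
  exact Nat.card_pos

lemma card_shortest_walks_mem_support (s v t : V) :
    Nat.card {p : G.Walk s t // p.length = G.dist s t ∧ v ∈ p.support}
      = Nat.card {p : G.Walk s v // p.length = G.dist s v} * dagPathCount G s v t := by
  classical
  rw [dagPathCount, ← Nat.card_prod]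
  refine Nat.card_congr
    { toFun := fun p =>
        (⟨p.1.takeUntil v p.2.2, Walk.length_takeUntil_of_length_eq_dist p.2.1 p.2.2⟩,
         ⟨p.1.dropUntil v p.2.2, ?_⟩)
      invFun := fun pq =>
        ⟨pq.1.1.append pq.2.1, by rw [Walk.length_append, pq.1.2, pq.2.2],
         (Walk.mem_support_append_iff _ _).2 (Or.inl pq.1.1.end_mem_support)⟩
      left_inv := fun p => Subtype.ext (p.1.take_spec p.2.2)
      right_inv := fun pq => ?_ }
  · have hsplit := congrArg Walk.length (p.1.take_spec p.2.2)
    rw [Walk.length_append, Walk.length_takeUntil_of_length_eq_dist p.2.1 p.2.2] at hsplit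
    rw [hsplit, p.2.1]
  · obtain ⟨⟨a, ha⟩, ⟨b, hb⟩⟩ := pq
    have hab := (a.append b).take_spec
      ((Walk.mem_support_append_iff _ _).2 (Or.inl a.end_mem_support))
    obtain ⟨hta, htb⟩ := Walk.append_inj hab <| by
      rw [ha, Walk.length_takeUntil_of_length_eq_dist]
      rw [Walk.length_append, ha, hb]
    exact Prod.ext (Subtype.ext hta) (Subtype.ext htb)

lemma sigmaThr_eq_mul {s v t : V} (hvs : v ≠ s) (hvt : v ≠ t) :
    sigmaThr G s t v = sigmaP G s v * dagPathCount G s v t := by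
  rw [sigmaP_eq_card, ← card_shortest_walks_mem_support]
  exact Nat.card_congr <| Equiv.subtypeEquivRight fun p =>
    ⟨fun h => ⟨h.2.1, h.2.2.1⟩,
     fun h => ⟨p.isPath_of_length_eq_dist h.1, h.1, h.2, hvs, hvt⟩⟩

lemma sigmaThr_self (s t : V) : sigmaThr G s t t = 0 :=
  have : IsEmpty {p : G.Walk s t // p.IsPath ∧ p.length = G.dist s t ∧
      t ∈ p.support ∧ t ≠ s ∧ t ≠ t} := ⟨fun p => p.2.2.2.2.2 rfl⟩
  Nat.card_of_isEmpty

lemma dagPathCount_self (s u : V) : dagPathCount G s u u = 1 :=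
  Nat.card_eq_one_iff_exists.2 ⟨⟨.nil, rfl⟩, fun q =>
    Subtype.ext (Walk.length_eq_zero_iff.1 (by have := q.2; omega)).eq_nil⟩

lemma dagPathCount_eq_zero_of_dist_lt {s w t : V} (h : G.dist s t < G.dist s w) :
    dagPathCount G s w t = 0 :=
  have : IsEmpty {q : G.Walk w t // G.dist s w + q.length = G.dist s t} :=
    ⟨fun q => by have := q.2; omega⟩
  Nat.card_of_isEmpty

lemma dagPathCount_eq_sum [Fintype V] [DecidableRel G.Adj] {s v t : V} (hsv : G.Reachable s v)
    (hvt : v ≠ t) :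
    dagPathCount G s v t
      = ∑ u with G.Adj u v ∧ G.dist s u = G.dist s v + 1, dagPathCount G s u t := by
  have hnil (q : G.Walk v t) : ¬ q.Nil := fun h => hvt h.eq
  have hstep (q : {q : G.Walk v t // G.dist s v + q.length = G.dist s t}) :=
    Walk.dist_snd_and_tail_of_dag hsv q.2 (hnil q.1)
  have (u : V) : Finite {q : G.Walk u t // G.dist s u + q.length = G.dist s t} :=
    Walk.finite_subtype_of_length_eq (n := G.dist s t - G.dist s u) fun _ _ => by omega
  rw [Finset.sum_subtype _ (fun _ => Finset.mem_filter_univ _)]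
  simp only [dagPathCount]
  rw [← Nat.card_sigma]
  exact Nat.card_congr
    { toFun := fun q =>
        ⟨⟨q.1.snd, (q.1.adj_snd (hnil q.1)).symm, (hstep q).1⟩, ⟨q.1.tail, (hstep q).2⟩⟩
      invFun := fun x => ⟨Walk.cons x.1.2.1.symm x.2.1, by
        have := x.1.2.2; have := x.2.2; rw [Walk.length_cons]; omega⟩
      left_inv := fun q => Subtype.ext (q.1.cons_tail_eq (hnil q.1))
      right_inv := fun ⟨_, q, _⟩ => by cases q <;> rfl }

end Counting

section Dependency

variable {V : Type} [Fintype V] (G : SimpleGraph V)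

lemma sigmaThr_eq_mul_sum [DecidableRel G.Adj] {s v : V} (hsv : G.Reachable s v) (hvs : v ≠ s)
    (t : V) :
    sigmaThr G s t v = sigmaP G s v *
      ∑ u with G.Adj u v ∧ G.dist s u = G.dist s v + 1, dagPathCount G s u t := by
  obtain rfl | hvt := eq_or_ne v t
  · rw [sigmaThr_self, Finset.sum_eq_zero fun u hu => dagPathCount_eq_zero_of_dist_lt G <| by
      rw [(Finset.mem_filter_univ u).1 hu |>.2]; omega, mul_zero]
  · rw [sigmaThr_eq_mul G hvs hvt, dagPathCount_eq_sum G hsv hvt]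

lemma one_add_sum_sigmaThr_div {s u : V} (hsu : G.Reachable s u) (hus : u ≠ s) :
    1 + ∑ t, (sigmaThr G s t u : ℚ) / sigmaP G s t
      = sigmaP G s u * ∑ t, (dagPathCount G s u t : ℚ) / sigmaP G s t := by
  classical
  have hσ : (sigmaP G s u : ℚ) ≠ 0 := by exact_mod_cast (sigmaP_pos G hsu).ne'
  have hterm (t : V) : (sigmaP G s u : ℚ) * (dagPathCount G s u t / sigmaP G s t)
      = sigmaThr G s t u / sigmaP G s t + if u = t then 1 else 0 := by
    obtain rfl | hut := eq_or_ne u t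
    · simp [sigmaThr_self, dagPathCount_self, hσ]
    · rw [sigmaThr_eq_mul G hus hut, if_neg hut]
      push_cast
      ring
  rw [Finset.mul_sum, Finset.sum_congr rfl fun t _ => hterm t, Finset.sum_add_distrib,
    Finset.sum_ite_eq, if_pos (Finset.mem_univ u), add_comm]

end Dependency

theorem brandes_recursion {V : Type} [Fintype V] (G : SimpleGraph V)
    [DecidableRel G.Adj] (hconn : G.Connected) (s v : V) (hvs : v ≠ s) :
    (∑ t, (sigmaThr G s t v : ℚ) / (sigmaP G s t : ℚ))
      = ∑ u, if G.Adj u v ∧ G.dist s u = G.dist s v + 1 then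
          ((sigmaP G s v : ℚ) / (sigmaP G s u : ℚ)) *
            (1 + ∑ t, (sigmaThr G s t u : ℚ) / (sigmaP G s t : ℚ))
        else 0 := by
  rw [← Finset.sum_filter]
  calc ∑ t, (sigmaThr G s t v : ℚ) / sigmaP G s t
      = ∑ t, ∑ u with G.Adj u v ∧ G.dist s u = G.dist s v + 1,
          (sigmaP G s v : ℚ) * (dagPathCount G s u t / sigmaP G s t) := by
        simp only [sigmaThr_eq_mul_sum G (hconn s v) hvs, Nat.cast_mul, Nat.cast_sum,
          Finset.mul_sum, Finset.sum_div, mul_div_assoc]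
    _ = ∑ u with G.Adj u v ∧ G.dist s u = G.dist s v + 1,
          (sigmaP G s v : ℚ) * ∑ t, (dagPathCount G s u t : ℚ) / sigmaP G s t := by
        rw [Finset.sum_comm]
        simp only [Finset.mul_sum]
    _ = _ := Finset.sum_congr rfl fun u hu => by
        have hdist : G.dist s u = G.dist s v + 1 := ((Finset.mem_filter_univ u).1 hu).2
        have hus : u ≠ s := by rintro rfl; simp at hdist
        have hσ : (sigmaP G s u : ℚ) ≠ 0 := by exact_mod_cast (sigmaP_pos G (hconn s u)).ne'
        rw [one_add_sum_sigmaThr_div G (hconn s u) hus]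
        field_simp
end

section
/- Let u be an articulation vertex of connected graph G whose removal yields components with vertex sets C₁, …, C_k (k ≥ 2). Then the betweenness centrality of u decomposes as bc(u) = Σ_{i≠j} |C_i|·|C_j| + Σ_{i=1}^{k} bc_i(u), where the first sum counts ordered pairs of vertices in distinct components (for which δ_{st}(u) = 1), and bc_i(u) is the sum of pair dependencies δ_{st}(u) over ordered pairs s,t ∈ C_i. -/
open SimpleGraph

/-!
Every walk between two different components of `G - u` passes through `u`, so each such
ordered pair has pair dependency `1` on `u`; pairs with an endpoint at `u` contribute `0`.
Splitting the double sum defining `bc G u` along the partition `C` of `V \ {u}` therefore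
leaves the cross-component blocks, each counted by `|C i| * |C j|`, and the diagonal blocks.
-/

open Finset Function

section Partition

variable {ι α M : Type*} [Fintype ι] [Fintype α] [AddCommMonoid M]
  {C : ι → Set α} [∀ i, DecidablePred (· ∈ C i)]

theorem sum_eq_sum_sum_ite_mem (hC : Pairwise (Disjoint on C)) {f : α → M}
    (hf : ∀ x ∉ ⋃ i, C i, f x = 0) :
    ∑ x, f x = ∑ i, ∑ x, if x ∈ C i then f x else 0 := by
  rw [Finset.sum_comm]
  refine sum_congr rfl fun x _ => ?_
  by_cases hx : x ∈ ⋃ i, C i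
  · obtain ⟨i, hi⟩ := Set.mem_iUnion.1 hx
    rw [sum_eq_single i (fun j _ hji => if_neg fun hj => Set.disjoint_left.1 (hC hji) hj hi)
      (fun h => absurd (mem_univ i) h), if_pos hi]
  · simp only [hf x hx, ite_self, sum_const_zero]

theorem sum_sum_eq_sum_sum_sum_sum_ite_mem (hC : Pairwise (Disjoint on C)) {f : α → α → M}
    (hf : ∀ s t, s ∉ ⋃ i, C i ∨ t ∉ ⋃ i, C i → f s t = 0) :
    ∑ s, ∑ t, f s t = ∑ i, ∑ j, ∑ s, ∑ t, if s ∈ C i ∧ t ∈ C j then f s t else 0 := by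
  rw [sum_eq_sum_sum_ite_mem hC fun s hs => sum_eq_zero fun t _ => hf s t (.inl hs)]
  refine sum_congr rfl fun i _ => ?_
  rw [eq_comm, Finset.sum_comm]
  refine sum_congr rfl fun s _ => ?_
  by_cases hs : s ∈ C i
  · simp only [hs, true_and, if_true]
    exact (sum_eq_sum_sum_ite_mem hC fun t ht => hf s t (.inr ht)).symm
  · simp only [hs, false_and, if_false, sum_const_zero]

end Partition

theorem sum_sum_eq_sum_sum_ite_ne_add_sum_diag {ι M : Type*} [Fintype ι] [DecidableEq ι]
    [AddCommMonoid M] (A : ι → ι → M) :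
    ∑ i, ∑ j, A i j = ∑ i, ∑ j, (if i ≠ j then A i j else 0) + ∑ i, A i i := by
  rw [← sum_add_distrib]
  refine sum_congr rfl fun i _ => ?_
  rw [← Fintype.sum_ite_eq i (A i), ← sum_add_distrib]
  refine sum_congr rfl fun j _ => ?_
  by_cases h : i = j <;> simp [h]

theorem sum_sum_ite_mem_and_mem_eq_card_mul_card {α R : Type*} [Fintype α] [CommSemiring R]
    {A B : Set α} [DecidablePred (· ∈ A)] [DecidablePred (· ∈ B)] {f : α → α → R}
    (hf : ∀ a ∈ A, ∀ b ∈ B, f a b = 1) :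
    ∑ a, ∑ b, (if a ∈ A ∧ b ∈ B then f a b else 0) = Nat.card A * Nat.card B := by
  calc ∑ a, ∑ b, (if a ∈ A ∧ b ∈ B then f a b else 0)
      = ∑ a, ∑ b, (if a ∈ A then 1 else 0) * (if b ∈ B then (1 : R) else 0) := by
        refine sum_congr rfl fun a _ => sum_congr rfl fun b _ => ?_
        by_cases ha : a ∈ A <;> by_cases hb : b ∈ B <;> simp [ha, hb, hf]
    _ = Nat.card A * Nat.card B := by
        rw [← sum_mul_sum, sum_boole, sum_boole, Nat.card_eq_fintype_card,
          Nat.card_eq_fintype_card, Fintype.card_subtype, Fintype.card_subtype]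

namespace SimpleGraph

variable {V : Type} {G : SimpleGraph V}

/-- The pair dependency `δ_{st}(v)` of the paper. -/
noncomputable def pairDependency (G : SimpleGraph V) (s t v : V) : ℚ :=
  (sigmaThr G s t v : ℚ) / (sigmaP G s t : ℚ)

theorem sigmaP_pos [Finite V] {s t : V} (h : G.Reachable s t) : 0 < sigmaP G s t := by
  classical
  have := Fintype.ofFinite V
  obtain ⟨p, hp, hlen⟩ := h.exists_path_of_dist
  have : Nonempty {p : G.Walk s t // p.IsPath ∧ p.length = G.dist s t} := ⟨⟨p, hp, hlen⟩⟩
  exact Nat.card_pos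

theorem sigmaThr_eq_sigmaP {s t v : V} (hs : v ≠ s) (ht : v ≠ t)
    (h : ∀ p : G.Walk s t, v ∈ p.support) : sigmaThr G s t v = sigmaP G s t :=
  Nat.card_congr <| Equiv.subtypeEquivRight fun p =>
    ⟨fun ⟨hp, hlen, _⟩ => ⟨hp, hlen⟩, fun ⟨hp, hlen⟩ => ⟨hp, hlen, h p, hs, ht⟩⟩

theorem sigmaThr_left_self (t v : V) : sigmaThr G v t v = 0 :=
  Nat.card_eq_zero.2 <| .inl ⟨fun p => p.2.2.2.2.1 rfl⟩

theorem sigmaThr_right_self (s v : V) : sigmaThr G s v v = 0 :=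
  Nat.card_eq_zero.2 <| .inl ⟨fun p => p.2.2.2.2.2 rfl⟩

theorem pairDependency_left_self (t v : V) : pairDependency G v t v = 0 := by
  rw [pairDependency, sigmaThr_left_self, Nat.cast_zero, zero_div]

theorem pairDependency_right_self (s v : V) : pairDependency G s v v = 0 := by
  rw [pairDependency, sigmaThr_right_self, Nat.cast_zero, zero_div]

theorem pairDependency_eq_one [Finite V] {s t v : V} (hr : G.Reachable s t) (hs : v ≠ s)
    (ht : v ≠ t) (h : ∀ p : G.Walk s t, v ∈ p.support) : pairDependency G s t v = 1 := by
  rw [pairDependency, sigmaThr_eq_sigmaP hs ht h]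
  exact div_self (Nat.cast_ne_zero.2 (sigmaP_pos hr).ne')

theorem Walk.mem_support_of_separates {u a b : V} {A : Set V}
    (hA : ∀ x y : {w : V | w ≠ u}, (G.induce {w : V | w ≠ u}).Reachable x y → ↑x ∈ A → ↑y ∈ A)
    (ha : a ∈ A) (hb : b ∉ A) (p : G.Walk a b) : u ∈ p.support := by
  by_contra hu
  have hp : ∀ x ∈ p.support, x ∈ {w : V | w ≠ u} := fun x hx hxu => hu (hxu ▸ hx)
  exact hb (hA _ _ (p.induce _ hp).reachable ha)

end SimpleGraph

open scoped Classical in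
theorem articulation_bc_decomposition_general {V : Type} [Fintype V] (G : SimpleGraph V)
    (hconn : G.Connected) (u : V) (k : ℕ)
    (C : Fin k → Set V)
    (hdisj : ∀ i j, i ≠ j → Disjoint (C i) (C j))
    (hcover : (⋃ i, C i) = {w : V | w ≠ u})
    (hclosed : ∀ (i : Fin k) (a b : ↥{w : V | w ≠ u}),
      (G.induce {w : V | w ≠ u}).Reachable a b → ↑a ∈ C i → ↑b ∈ C i) :
    (∀ i j, i ≠ j → ∀ a ∈ C i, ∀ b ∈ C j,
      (sigmaThr G a b u : ℚ) / (sigmaP G a b : ℚ) = 1) ∧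
    bc G u = (∑ i, ∑ j, if i ≠ j then
        (Nat.card (C i) : ℚ) * (Nat.card (C j) : ℚ) else 0)
      + ∑ i, ∑ a : V, ∑ b : V, if a ∈ C i ∧ b ∈ C i then
          (sigmaThr G a b u : ℚ) / (sigmaP G a b : ℚ) else 0 := by
  have hne : ∀ i, ∀ w ∈ C i, u ≠ w := fun i w hw =>
    (hcover.subset (Set.mem_iUnion_of_mem i hw) : w ≠ u).symm
  have hcross : ∀ i j, i ≠ j → ∀ a ∈ C i, ∀ b ∈ C j, pairDependency G a b u = 1 :=
    fun i j hij a ha b hb => pairDependency_eq_one (hconn.preconnected a b) (hne i a ha)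
      (hne j b hb) (Walk.mem_support_of_separates (hclosed i) ha
        fun hb' => Set.disjoint_left.1 (hdisj i j hij) hb' hb)
  have hvanish : ∀ s t, s ∉ ⋃ i, C i ∨ t ∉ ⋃ i, C i → pairDependency G s t u = 0 := by
    rintro s t (hs | ht)
    · obtain rfl : s = u := by simpa [hcover] using hs
      exact pairDependency_left_self t s
    · obtain rfl : t = u := by simpa [hcover] using ht
      exact pairDependency_right_self s t
  refine ⟨hcross, ?_⟩
  simp only [bc, ← pairDependency.eq_1]
  rw [sum_sum_eq_sum_sum_sum_sum_ite_mem (fun i j hij => hdisj i j hij) hvanish,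
    sum_sum_eq_sum_sum_ite_ne_add_sum_diag]
  congr 1
  refine sum_congr rfl fun i _ => sum_congr rfl fun j _ => ?_
  split_ifs with hij
  · exact sum_sum_ite_mem_and_mem_eq_card_mul_card (hcross i j hij)
  · rfl

open scoped Classical in
theorem articulation_bc_decomposition {V : Type} [Fintype V] (G : SimpleGraph V)
    (hconn : G.Connected) (u : V) (k : ℕ) (hk : 2 ≤ k)
    (C : Fin k → Set V)
    (hdisj : ∀ i j, i ≠ j → Disjoint (C i) (C j))
    (hcover : (⋃ i, C i) = {w : V | w ≠ u})
    (hclosed : ∀ (i : Fin k) (a b : ↥{w : V | w ≠ u}),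
      (G.induce {w : V | w ≠ u}).Reachable a b → ↑a ∈ C i → ↑b ∈ C i) :
    (∀ i j, i ≠ j → ∀ a ∈ C i, ∀ b ∈ C j,
      (sigmaThr G a b u : ℚ) / (sigmaP G a b : ℚ) = 1) ∧
    bc G u = (∑ i, ∑ j, if i ≠ j then
        (Nat.card (C i) : ℚ) * (Nat.card (C j) : ℚ) else 0)
      + ∑ i, ∑ a : V, ∑ b : V, if a ∈ C i ∧ b ∈ C i then
          (sigmaThr G a b u : ℚ) / (sigmaP G a b : ℚ) else 0 :=
  articulation_bc_decomposition_general G hconn u k C hdisj hcover hclosed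
end
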